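/- Let y ∈ A^(ℤ×ℤ) be a periodic configuration over a finite alphabet A, let E ⊆ ℤ×ℤ be finite, and let c ∈ A^(ℤ×ℤ) be a non-periodic configuration with c(u) = y(u) for all u ∉ E. Then every configuration x in the topological closure of the shift-orbit of c is either a shift of c (x = σ_v c for some v) or a shift of y. Consequently, c is at level 1 in the subshift equal to the closure of its shift-orbit. -/

import Mathlib

namespace CountableSubshift

/-- A configuration over alphabet `A` on the plane `ℤ × ℤ`. -/
abbrev Config (A : Type*) := ℤ × ℤ → A

variable {A : Type*}

/-- The shift by a vector `v`. -/
def shift (v : ℤ × ℤ) (x : Config A) : Config A := fun u => x (u + v)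

/-- The shift-orbit of a configuration. -/
def orbit (x : Config A) : Set (Config A) := Set.range fun v => shift v x

variable [TopologicalSpace A]

/-- `Preceq x y` iff `x` belongs to the closure of the shift-orbit of `y`. -/
def Preceq (x y : Config A) : Prop := x ∈ closure (orbit y)

/-- Strict version of `Preceq`. -/
def Prec (x y : Config A) : Prop := Preceq x y ∧ ¬ Preceq y x

/-- `x ≈ y` : mutual `Preceq`. -/
def OrbEquiv (x y : Config A) : Prop := Preceq x y ∧ Preceq y x

/-- A subshift: nonempty, closed and shift-invariant set of configurations. -/
def IsSubshift (X : Set (Config A)) : Prop :=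
  X.Nonempty ∧ IsClosed X ∧ ∀ v : ℤ × ℤ, shift v '' X = X

/-- A configuration is periodic if it has two linearly independent vectors of periodicity. -/
def Periodic (x : Config A) : Prop :=
  ∃ v w : ℤ × ℤ, shift v x = x ∧ shift w x = x ∧ LinearIndependent ℤ ![v, w]

/-- `x` is at level 0 in `X`: it is `Preceq`-minimal in `X`. -/
def Level0 (X : Set (Config A)) (x : Config A) : Prop :=
  x ∈ X ∧ ∀ y ∈ X, Preceq y x → Preceq x y

/-- `x` is at level 1 in `X`. -/
def Level1 (X : Set (Config A)) (x : Config A) : Prop :=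
  x ∈ X ∧ ¬ Level0 X x ∧ ∀ y ∈ X, Prec y x → Level0 X y

/-- `x` is at level 2 in `X`. -/
def Level2 (X : Set (Config A)) (x : Config A) : Prop :=
  x ∈ X ∧ ¬ Level0 X x ∧ ¬ Level1 X x ∧ ∀ y ∈ X, Prec y x → Level0 X y ∨ Level1 X y

/-- The pattern `p` with (finite) domain `D` appears in `x` at position `u`. -/
def AppearsAt (D : Finset (ℤ × ℤ)) (p : ℤ × ℤ → A) (x : Config A) (u : ℤ × ℤ) : Prop :=
  ∀ d ∈ D, x (u + d) = p d

/-- A subshift of finite type: the nonempty set of configurations avoiding a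
finite family of forbidden patterns. -/
def IsSFT (X : Set (Config A)) : Prop :=
  X.Nonempty ∧ ∃ (n : ℕ) (D : Fin n → Finset (ℤ × ℤ)) (p : Fin n → ℤ × ℤ → A),
    X = {x : Config A | ∀ (i : Fin n) (u : ℤ × ℤ), ¬ AppearsAt (D i) (p i) x u}

/-- Every pattern appearing in `c` appears at infinitely many positions. -/
def AllPatternsInfinite (c : Config A) : Prop :=
  ∀ (D : Finset (ℤ × ℤ)) (u : ℤ × ℤ),
    {u' : ℤ × ℤ | ∀ d ∈ D, c (u' + d) = c (u + d)}.Infinite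

/-- The standard dot product on `ℤ × ℤ`. -/
def dot (u w : ℤ × ℤ) : ℤ := u.1 * w.1 + u.2 * w.2

section Aux

lemma shift_zero' (x : Config A) : shift 0 x = x := funext fun u => by simp [shift]

lemma shift_add' (v w : ℤ × ℤ) (x : Config A) : shift w (shift v x) = shift (v + w) x :=
  funext fun u => by simp [shift, add_assoc, add_comm w v]

/-- The period group of a configuration. -/
def periodsGroup (y : Config A) : AddSubgroup (ℤ × ℤ) where
  carrier := {v | shift v y = y}
  zero_mem' := shift_zero' y
  add_mem' := by
    intro a b ha hb
    have h : shift (a + b) y = shift b (shift a y) := (shift_add' a b y).symm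
    simp only [Set.mem_setOf_eq] at ha hb ⊢
    rw [h, ha, hb]
  neg_mem' := by
    intro a ha
    simp only [Set.mem_setOf_eq] at ha ⊢
    conv_lhs => rw [← ha]
    rw [shift_add', add_neg_cancel, shift_zero']

lemma shift_eq_of_sub_mem_periods {y : Config A} {v r : ℤ × ℤ}
    (h : v - r ∈ periodsGroup y) : shift v y = shift r y := by
  have h1 : shift (v - r) y = y := h
  calc shift v y = shift ((v - r) + r) y := by ring_nf
    _ = shift r (shift (v - r) y) := (shift_add' _ _ _).symm
    _ = shift r y := by rw [h1]

lemma mem_orbit_self' (x : Config A) : x ∈ orbit x := ⟨0, shift_zero' x⟩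

lemma orbit_shift' (v : ℤ × ℤ) (x : Config A) : orbit (shift v x) = orbit x := by
  ext z
  constructor
  · rintro ⟨w, rfl⟩; exact ⟨v + w, (shift_add' v w x).symm⟩
  · rintro ⟨w, rfl⟩
    exact ⟨w - v, show shift (w - v) (shift v x) = shift w x by
      rw [shift_add', add_sub_cancel]⟩

lemma periodic_shift' {x : Config A} (v : ℤ × ℤ) (h : Periodic x) : Periodic (shift v x) := by
  obtain ⟨p, q, hp, hq, hli⟩ := h
  refine ⟨p, q, ?_, ?_, hli⟩
  · rw [shift_add', add_comm, ← shift_add', hp]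
  · rw [shift_add', add_comm, ← shift_add', hq]

lemma orbit_finite_of_periodic {y : Config A} (hy : Periodic y) : (orbit y).Finite := by
  obtain ⟨p, q, hp, hq, hli⟩ := hy
  have hpm : p ∈ periodsGroup y := hp
  have hqm : q ∈ periodsGroup y := hq
  set d : ℤ := p.1 * q.2 - p.2 * q.1 with hd
  have hd0 : d ≠ 0 := by
    intro h0
    have pair := LinearIndependent.pair_iff.mp hli
    have h1 : q.2 • p + (-p.2) • q = 0 := by
      apply Prod.ext <;> simp [Prod.smul_fst, Prod.smul_snd, smul_eq_mul] <;> nlinarith [hd]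
    have h2 : (-q.1) • p + p.1 • q = 0 := by
      apply Prod.ext <;> simp [Prod.smul_fst, Prod.smul_snd, smul_eq_mul] <;> nlinarith [hd]
    obtain ⟨e1, e2⟩ := pair _ _ h1
    obtain ⟨e3, e4⟩ := pair _ _ h2
    have hp0 : p = 0 := by
      apply Prod.ext <;> simp
      · have := pair 1 0 (by simp [Prod.ext_iff] at *; constructor <;> nlinarith)
        omega
      · omega
    exact hli.ne_zero 0 (by simpa using hp0)
  have hd1 : (d, (0:ℤ)) ∈ periodsGroup y := by
    have h : (d, (0:ℤ)) = q.2 • p - p.2 • q := by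
      apply Prod.ext <;> simp [smul_eq_mul] <;> ring
    rw [h]
    exact sub_mem (zsmul_mem hpm _) (zsmul_mem hqm _)
  have hd2 : ((0:ℤ), d) ∈ periodsGroup y := by
    have h : ((0:ℤ), d) = p.1 • q - q.1 • p := by
      apply Prod.ext <;> simp [smul_eq_mul] <;> ring
    rw [h]
    exact sub_mem (zsmul_mem hqm _) (zsmul_mem hpm _)
  set m : ℤ := d ^ 2 with hm
  have hmpos : 0 < m := by positivity
  have hm1 : ((m, (0:ℤ)) : ℤ × ℤ) ∈ periodsGroup y := by
    have h : ((m, (0:ℤ)) : ℤ × ℤ) = d • ((d, (0:ℤ)) : ℤ × ℤ) := by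
      apply Prod.ext <;> simp [smul_eq_mul] <;> ring
    rw [h]; exact zsmul_mem hd1 _
  have hm2 : (((0:ℤ), m) : ℤ × ℤ) ∈ periodsGroup y := by
    have h : (((0:ℤ), m) : ℤ × ℤ) = d • (((0:ℤ), d) : ℤ × ℤ) := by
      apply Prod.ext <;> simp [smul_eq_mul] <;> ring
    rw [h]; exact zsmul_mem hd2 _
  apply Set.Finite.subset (Set.Finite.image (fun v => shift v y)
    (Set.finite_Icc ((0:ℤ), (0:ℤ)) (m - 1, m - 1)))
  rintro _ ⟨v, rfl⟩
  refine ⟨(v.1 % m, v.2 % m), ?_, ?_⟩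
  · constructor
    · exact ⟨Int.emod_nonneg _ hmpos.ne', Int.emod_nonneg _ hmpos.ne'⟩
    · exact ⟨by have := Int.emod_lt_of_pos v.1 hmpos; omega,
             by have := Int.emod_lt_of_pos v.2 hmpos; omega⟩
  · symm
    apply shift_eq_of_sub_mem_periods
    have h : v - (v.1 % m, v.2 % m) = (v.1 / m) • ((m, (0:ℤ)) : ℤ × ℤ)
        + (v.2 / m) • (((0:ℤ), m) : ℤ × ℤ) := by
      apply Prod.ext <;> simp [smul_eq_mul]
      · linear_combination - Int.emod_add_mul_ediv v.1 m
      · linear_combination - Int.emod_add_mul_ediv v.2 m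
    rw [h]
    exact add_mem (zsmul_mem hm1 _) (zsmul_mem hm2 _)

lemma closure_orbit_of_periodic [DiscreteTopology A] {y : Config A} (hy : Periodic y) :
    closure (orbit y) = orbit y := ((orbit_finite_of_periodic hy).isClosed).closure_eq

/-- Main classification lemma. -/
lemma classify_closure_orbit [DiscreteTopology A] {y c : Config A} (hy : Periodic y)
    (E : Finset (ℤ × ℤ)) (hagree : ∀ u ∉ E, c u = y u) :
    ∀ x ∈ closure (orbit c), (∃ v : ℤ × ℤ, x = shift v c) ∨ x ∈ orbit y := by
  intro x hx
  obtain ⟨f, hf, htend⟩ := mem_closure_iff_seq_limit.mp hx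
  choose v hv using hf
  have hten : ∀ u : ℤ × ℤ, ∀ᶠ n in Filter.atTop, c (u + v n) = x u := by
    intro u
    have h := tendsto_pi_nhds.mp htend u
    rw [nhds_discrete, Filter.tendsto_pure] at h
    refine h.mono fun n hn => ?_
    rw [← hn, ← hv n]; rfl
  by_cases hcase : ∃ v₀ : ℤ × ℤ, {n : ℕ | v n = v₀}.Infinite
  · obtain ⟨v₀, hv₀⟩ := hcase
    left
    refine ⟨v₀, funext fun u => ?_⟩
    obtain ⟨N, hN⟩ := Filter.eventually_atTop.mp (hten u)
    obtain ⟨n, hn, hnN⟩ := hv₀.exists_gt N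
    rw [← hN n hnN.le, hn]
    rfl
  · right
    push_neg at hcase
    have horbfin : (orbit y).Finite := orbit_finite_of_periodic hy
    haveI := horbfin.to_subtype
    set g : ℕ → ↥(orbit y) := fun n => ⟨shift (v n) y, ⟨v n, rfl⟩⟩ with hg
    obtain ⟨b, hb⟩ := Finite.exists_infinite_fiber g
    have hbinf : (g ⁻¹' {b}).Infinite := Set.infinite_coe_iff.mp hb
    have hEfin : ∀ u : ℤ × ℤ, {n : ℕ | u + v n ∈ E}.Finite := by
      intro u
      apply Set.Finite.subset (Set.Finite.biUnion E.finite_toSet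
        (fun e _ => hcase (e - u)))
      intro n hn
      exact Set.mem_biUnion hn (by simp)
    have hxb : x = (b : Config A) := by
      funext u
      obtain ⟨N, hN⟩ := Filter.eventually_atTop.mp (hten u)
      obtain ⟨n, hn, hnN⟩ := (hbinf.diff (hEfin u)).exists_gt N
      obtain ⟨hnT, hnE⟩ := hn
      have h1 : c (u + v n) = x u := hN n hnN.le
      have h2 : c (u + v n) = y (u + v n) := hagree _ hnE
      have h3 : g n = b := hnT
      calc x u = y (u + v n) := by rw [← h1, h2]
        _ = (g n : Config A) u := rfl
        _ = (b : Config A) u := by rw [h3]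
    rw [hxb]; exact b.2

end Aux

theorem stmt7 {A : Type*} [Fintype A] [Nonempty A] [TopologicalSpace A] [DiscreteTopology A]
    (y : Config A) (hy : Periodic y)
    (E : Finset (ℤ × ℤ)) (c : Config A) (hcnp : ¬ Periodic c)
    (hagree : ∀ u ∉ E, c u = y u) :
    (∀ x ∈ closure (orbit c), (∃ v : ℤ × ℤ, x = shift v c) ∨ (∃ v : ℤ × ℤ, x = shift v y)) ∧
      Level1 (closure (orbit c)) c := by
  have hy' := hy
  obtain ⟨p, q, hp, hq, hli⟩ := hy'
  have hpmem : p ∈ periodsGroup y := hp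
  have hp0 : p ≠ 0 := by have h := hli.ne_zero 0; simpa using h
  have hmain : ∀ x ∈ closure (orbit c),
      (∃ v : ℤ × ℤ, x = shift v c) ∨ (∃ v : ℤ × ℤ, x = shift v y) := by
    intro x hx
    rcases classify_closure_orbit hy E hagree x hx with h | ⟨v, hv⟩
    · exact Or.inl h
    · exact Or.inr ⟨v, hv.symm⟩
  have hcX : c ∈ closure (orbit c) := subset_closure (mem_orbit_self' c)
  have hyX : y ∈ closure (orbit c) := by
    have htend : Filter.Tendsto (fun n : ℕ => shift ((n : ℤ) • p) c)
        Filter.atTop (nhds y) := by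
      rw [tendsto_pi_nhds]
      intro u
      rw [nhds_discrete, Filter.tendsto_pure]
      have hfin : {n : ℕ | u + (n : ℤ) • p ∈ E}.Finite := by
        have hinj : Set.InjOn (fun n : ℕ => u + (n : ℤ) • p) ((fun n : ℕ => u + (n : ℤ) • p) ⁻¹' E) := by
          intro n _ m _ h
          have h2 : ((n : ℤ)) • p = ((m : ℤ)) • p := by
            have := h; simpa [add_right_inj] using this
          exact_mod_cast smul_left_injective ℤ hp0 h2
        exact Set.Finite.preimage hinj E.finite_toSet
      have hev : ∀ᶠ n : ℕ in Filter.atTop, u + (n : ℤ) • p ∉ E := by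
        rw [← Nat.cofinite_eq_atTop]
        exact Set.Finite.eventually_cofinite_notMem hfin
      refine hev.mono fun n hn => ?_
      have hper : shift ((n : ℤ) • p) y = y := zsmul_mem hpmem (n : ℤ)
      show c (u + (n : ℤ) • p) = y u
      rw [hagree _ hn]
      exact congrFun hper u
    exact mem_closure_of_tendsto htend (Filter.Eventually.of_forall fun n => ⟨_, rfl⟩)
  have hycl : closure (orbit y) = orbit y := closure_orbit_of_periodic hy
  have hnotcy : ¬ Preceq c y := by
    intro hcy
    rw [Preceq, hycl] at hcy
    obtain ⟨w, hw⟩ := hcy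
    exact hcnp (hw ▸ periodic_shift' w hy)
  refine ⟨hmain, hcX, ?_, ?_⟩
  · intro hL0
    exact hnotcy (hL0.2 y hyX hyX)
  · intro z hzX hzc
    rcases hmain z hzX with ⟨v, rfl⟩ | ⟨v, rfl⟩
    · exfalso
      apply hzc.2
      show c ∈ closure (orbit (shift v c))
      rw [orbit_shift']
      exact subset_closure (mem_orbit_self' c)
    · refine ⟨hzX, ?_⟩
      intro t htX htz
      have ht : t ∈ orbit y := by
        have h := htz
        rwa [Preceq, orbit_shift', hycl] at h
      obtain ⟨w, rfl⟩ := ht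
      show shift v y ∈ closure (orbit (shift w y))
      rw [orbit_shift']
      exact subset_closure ⟨v, rfl⟩


end CountableSubshift
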